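/- Suppose F is strictly convex. Let Ω be a nonempty, closed, bounded subset of X and let S ⊆ X be convex, and assume the farthest projection P_F(x; Ω) is nonempty for every x ∈ S. Then the function h(x) := C_F(x; Ω) is convex on S and is not constant on any segment [a,b] ⊆ S with a ≠ b. -/
import Mathlib


open Set Pointwise Filter Topology Bornology Function

variable {X : Type*} [NormedAddCommGroup X] [NormedSpace ℝ X]

/-- The Minkowski gauge of `F`: `ρ_F(x) = inf {t ≥ 0 : x ∈ t • F}`. -/
noncomputable def rhoF (F : Set X) (x : X) : ℝ :=
  sInf {t : ℝ | 0 ≤ t ∧ x ∈ t • F}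

/-- The maximal time function `C_F(x; Q) = sup {ρ_F(q - x) : q ∈ Q}`. -/
noncomputable def maxTime (F Q : Set X) (x : X) : ℝ :=
  sSup ((fun q => rhoF F (q - x)) '' Q)

/-- The minimal time function `T_F(x; Θ) = inf {ρ_F(q - x) : q ∈ Θ}`. -/
noncomputable def minTime (F Θ : Set X) (x : X) : ℝ :=
  sInf ((fun q => rhoF F (q - x)) '' Θ)

/-- The farthest projection `P_F(x; Ω) = {ω ∈ Ω : ρ_F(ω - x) = C_F(x; Ω)}`. -/
def farProj (F Ω : Set X) (x : X) : Set X :=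
  {ω ∈ Ω | rhoF F (ω - x) = maxTime F Ω x}

lemma rhoF_eq_gauge (F : Set X) (hF0 : (0 : X) ∈ F) : rhoF F = gauge F := by
  funext x
  rcases eq_or_ne x 0 with rfl | hx
  · rw [gauge_zero]
    unfold rhoF
    have h0 : (0 : ℝ) ∈ {t : ℝ | 0 ≤ t ∧ (0 : X) ∈ t • F} := by
      refine ⟨le_refl 0, ?_⟩
      rw [zero_smul_set ⟨0, hF0⟩]
      exact rfl
    refine le_antisymm (csInf_le ⟨0, fun t ht => ht.1⟩ h0) (le_csInf ⟨0, h0⟩ fun t ht => ht.1)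
  · unfold rhoF gauge
    congr 1
    ext t
    simp only [mem_setOf_eq]
    constructor
    · rintro ⟨ht, hxt⟩
      rcases ht.eq_or_lt with rfl | ht'
      · rw [zero_smul_set ⟨0, hF0⟩] at hxt
        exact absurd hxt hx
      · exact ⟨ht', hxt⟩
    · rintro ⟨ht, hxt⟩
      exact ⟨ht.le, hxt⟩

/-- Proposition 3.2. -/
theorem stmt7 (F Ω S : Set X)
    (hFc : IsClosed F) (hFb : IsBounded F) (hFconv : Convex ℝ F)
    (hF0 : (0 : X) ∈ interior F) (hFs : StrictConvex ℝ F)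
    (hΩne : Ω.Nonempty) (hΩc : IsClosed Ω) (hΩb : IsBounded Ω)
    (hS : Convex ℝ S) (hproj : ∀ x ∈ S, (farProj F Ω x).Nonempty) :
    ConvexOn ℝ S (maxTime F Ω) ∧
      ∀ a b : X, a ≠ b → segment ℝ a b ⊆ S →
        ¬ ∃ c : ℝ, ∀ x ∈ segment ℝ a b, maxTime F Ω x = c := by
  have hF0' : (0 : X) ∈ F := interior_subset hF0
  have hρ : rhoF F = gauge F := rhoF_eq_gauge F hF0'
  have hnhds : F ∈ 𝓝 (0 : X) := mem_interior_iff_mem_nhds.mp hF0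
  have habs : Absorbent ℝ F := absorbent_nhds_zero hnhds
  obtain ⟨r, hr, hball⟩ : ∃ r > 0, Metric.ball (0 : X) r ⊆ F := Metric.mem_nhds_iff.mp hnhds
  obtain ⟨R, hR⟩ : ∃ R, Ω ⊆ Metric.closedBall (0 : X) R :=
    (Metric.isBounded_iff_subset_closedBall 0).mp hΩb
  -- boundedness of the defining family
  have hbdd : ∀ x : X, BddAbove ((fun q => rhoF F (q - x)) '' Ω) := by
    intro x
    refine ⟨(R + ‖x‖) / r, ?_⟩
    rintro _ ⟨q, hq, rfl⟩
    rw [hρ]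
    have h1 : r * gauge F (q - x) ≤ ‖q - x‖ := mul_gauge_le_norm hball
    have h2 : ‖q - x‖ ≤ R + ‖x‖ := by
      calc ‖q - x‖ ≤ ‖q‖ + ‖x‖ := norm_sub_le q x
        _ ≤ R + ‖x‖ := by
            have : ‖q‖ ≤ R := by simpa using hR hq
            linarith
    rw [le_div_iff₀ hr]
    calc gauge F (q - x) * r = r * gauge F (q - x) := mul_comm _ _
      _ ≤ ‖q - x‖ := h1
      _ ≤ R + ‖x‖ := h2
  have hmem_le : ∀ x : X, ∀ q ∈ Ω, gauge F (q - x) ≤ maxTime F Ω x := by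
    intro x q hq
    have : rhoF F (q - x) ≤ maxTime F Ω x := le_csSup (hbdd x) ⟨q, hq, rfl⟩
    rwa [hρ] at this
  constructor
  · refine ⟨hS, ?_⟩
    intro a ha b hb t s ht hs hts
    have hne : ((fun q => rhoF F (q - (t • a + s • b))) '' Ω).Nonempty := hΩne.image _
    refine csSup_le hne ?_
    rintro _ ⟨q, hq, rfl⟩
    have key : q - (t • a + s • b) = t • (q - a) + s • (q - b) := by
      rw [eq_comm, show t • (q - a) + s • (q - b) = (t + s) • q - (t • a + s • b) from by module,
        hts, one_smul]
    show rhoF F (q - (t • a + s • b)) ≤ t • maxTime F Ω a + s • maxTime F Ω b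
    simp only [smul_eq_mul]
    rw [hρ, key]
    calc gauge F (t • (q - a) + s • (q - b))
        ≤ gauge F (t • (q - a)) + gauge F (s • (q - b)) := gauge_add_le hFconv habs _ _
      _ = t * gauge F (q - a) + s * gauge F (q - b) := by
          rw [gauge_smul_of_nonneg ht, gauge_smul_of_nonneg hs, smul_eq_mul, smul_eq_mul]
      _ ≤ t * maxTime F Ω a + s * maxTime F Ω b := by
          have := hmem_le a q hq
          have := hmem_le b q hq
          nlinarith [hmem_le a q hq, hmem_le b q hq]
  · rintro a b hab hseg ⟨c, hc⟩
    set m : X := (1/2 : ℝ) • a + (1/2 : ℝ) • b with hm_def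
    have hm : m ∈ segment ℝ a b := ⟨1/2, 1/2, by norm_num, by norm_num, by norm_num, rfl⟩
    obtain ⟨ω, hωΩ, hωeq⟩ := hproj m (hseg hm)
    have hcm : maxTime F Ω m = c := hc m hm
    have hωc : gauge F (ω - m) = c := by rw [← hρ]; rw [hωeq, hcm]
    have hc0 : 0 ≤ c := hωc ▸ gauge_nonneg _
    have hvonN : Bornology.IsVonNBounded ℝ F := NormedSpace.isVonNBounded_of_isBounded ℝ hFb
    have hga : gauge F (ω - a) ≤ c := by
      have := hmem_le a ω hωΩ
      rwa [hc a (left_mem_segment ℝ a b)] at this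
    have hgb : gauge F (ω - b) ≤ c := by
      have := hmem_le b ω hωΩ
      rwa [hc b (right_mem_segment ℝ a b)] at this
    rcases hc0.eq_or_lt with rfl | hcpos
    · have hza : ω - a = 0 := by
        rw [← gauge_eq_zero habs hvonN]
        exact le_antisymm hga (gauge_nonneg _)
      have hzb : ω - b = 0 := by
        rw [← gauge_eq_zero habs hvonN]
        exact le_antisymm hgb (gauge_nonneg _)
      exact hab ((sub_eq_zero.mp hza).symm.trans (sub_eq_zero.mp hzb))
    · set u : X := c⁻¹ • (ω - a) with hu_def
      set v : X := c⁻¹ • (ω - b) with hv_def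
      have hcinv : (0 : ℝ) ≤ c⁻¹ := inv_nonneg.mpr hc0
      have hgu : gauge F u ≤ 1 := by
        rw [hu_def, gauge_smul_of_nonneg hcinv, smul_eq_mul]
        rw [inv_mul_le_iff₀ hcpos, mul_one]
        exact hga
      have hgv : gauge F v ≤ 1 := by
        rw [hv_def, gauge_smul_of_nonneg hcinv, smul_eq_mul]
        rw [inv_mul_le_iff₀ hcpos, mul_one]
        exact hgb
      have huF : u ∈ F := by
        rw [← hFc.closure_eq]
        exact (gauge_le_one_iff_mem_closure hFconv hnhds).mp hgu
      have hvF : v ∈ F := by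
        rw [← hFc.closure_eq]
        exact (gauge_le_one_iff_mem_closure hFconv hnhds).mp hgv
      have huv : u ≠ v := by
        intro h
        apply hab
        have h2 : ω - a = ω - b := smul_right_injective X (ne_of_gt (inv_pos.mpr hcpos)) h
        exact sub_right_injective h2
      have hmid : (1/2 : ℝ) • u + (1/2 : ℝ) • v ∈ interior F :=
        hFs huF hvF huv (by norm_num) (by norm_num) (by norm_num)
      have hmid_eq : (1/2 : ℝ) • u + (1/2 : ℝ) • v = c⁻¹ • (ω - m) := by
        rw [hu_def, hv_def, hm_def]
        module
      have hglt : gauge F (c⁻¹ • (ω - m)) < 1 := by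
        rw [← hmid_eq]
        exact interior_subset_gauge_lt_one F hmid
      rw [gauge_smul_of_nonneg hcinv, smul_eq_mul, hωc, inv_mul_cancel₀ (ne_of_gt hcpos)] at hglt
      exact lt_irrefl 1 hglt
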